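/- Let n ≥ 3 and P = ℚ[X₁,…,X_{2n}]. Let 𝔟⁻ be the ideal of P generated by all Xᵢ² (i = 1,…,2n) and all e_{n−1}(Xᵢ : i ∈ T) for subsets T ⊆ {2,…,2n} with |T| = n, where e_{n−1} is the elementary symmetric polynomial of degree n−1. Then for every subset J ⊆ {2,…,2n} with |J| = n−1, the monomial ∏_{j∈J} X_j lies in 𝔟⁻. -/

import Mathlib

/-!
Over ℚ, averaging `e_{n-1}` over the one-point deletions of a set `S` gives
`(|S| - n + 1) • e_{n-1}(S)`, so the generators force `e_{n-1}(S) ∈ 𝔟⁻` for every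
`S ⊆ {2,…,2n}` with `|S| ≥ n`. Pascal's rule
`X_x e_k(S) = e_{k+1}(S ∪ {x}) - e_{k+1}(S)` then moves variables out of the symmetric
function one at a time: `X^J e_k(S) ∈ 𝔟⁻` whenever `J` and `S` are disjoint, `|S| ≥ n` and
`|J| + k = n - 1`. For `S` the complement of `J` in `{2,…,2n}`, which has `n` elements, and
`k = 0` this is `X^J`.
-/

open MvPolynomial Finset

noncomputable section

/-- e_j(Xᵢ : i ∈ I), the elementary symmetric polynomial in the variables indexed by I. -/
def esF {N : ℕ} (I : Finset (Fin N)) (j : ℕ) : MvPolynomial (Fin N) ℚ :=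
  ∑ J ∈ powersetCard j I, ∏ i ∈ J, X i

section

variable {N : ℕ}

theorem esF_zero (S : Finset (Fin N)) : esF S 0 = 1 := by
  simp [esF]

theorem esF_insert {x : Fin N} {S : Finset (Fin N)} (hx : x ∉ S) (k : ℕ) :
    esF (insert x S) (k + 1) = esF S (k + 1) + X x * esF S k := by
  have hxW : ∀ W ∈ powersetCard k S, x ∉ W := fun W hW hxW =>
    hx ((mem_powersetCard.1 hW).1 hxW)
  have hdisj : Disjoint (powersetCard (k + 1) S) ((powersetCard k S).image (insert x)) := by
    simp only [disjoint_left, mem_image, not_exists, not_and]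
    rintro T hT W - rfl
    exact hx ((mem_powersetCard.1 hT).1 (mem_insert_self x W))
  have hinj : Set.InjOn (insert x) (powersetCard k S : Set (Finset (Fin N))) :=
    fun W hW V hV h => by rw [← erase_insert (hxW W hW), h, erase_insert (hxW V hV)]
  rw [esF, esF, esF, powersetCard_succ_insert hx, sum_union hdisj, sum_image hinj, mul_sum]
  congr 1
  exact sum_congr rfl fun W hW => prod_insert (hxW W hW)

theorem sum_esF_erase (S : Finset (Fin N)) (j : ℕ) :
    ∑ x ∈ S, esF (S.erase x) j = (S.card - j) • esF S j := by
  have herase : ∀ x, powersetCard j (S.erase x) = {W ∈ powersetCard j S | x ∉ W} :=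
    fun x => by
      ext W
      simp only [mem_powersetCard, mem_filter, subset_erase]
      tauto
  have hcount : ∀ W ∈ powersetCard j S, #{x ∈ S | x ∉ W} = S.card - j := fun W hW => by
    obtain ⟨hWS, hWc⟩ := mem_powersetCard.1 hW
    rw [filter_notMem_eq_sdiff, card_sdiff_of_subset hWS, hWc]
  simp only [esF, herase, sum_filter]
  rw [sum_comm, smul_sum]
  refine sum_congr rfl fun W hW => ?_
  rw [← sum_filter, sum_const, hcount W hW]

variable (I : Ideal (MvPolynomial (Fin N) ℚ)) {U : Finset (Fin N)} {j : ℕ}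

theorem esF_mem_of_lt_card (hI : ∀ T ⊆ U, T.card = j + 1 → esF T j ∈ I) :
    ∀ S ⊆ U, j < S.card → esF S j ∈ I := by
  intro S
  induction S using Finset.strongInduction with
  | H S ih =>
    intro hSU hjS
    rcases (Nat.succ_le_of_lt hjS).eq_or_lt with hS | hS
    · exact hI S hSU hS.symm
    have hsum : (S.card - j) • esF S j ∈ I := by
      rw [← sum_esF_erase]
      refine I.sum_mem fun x hx => ih _ (erase_ssubset hx) ((erase_subset x S).trans hSU) ?_
      rw [card_erase_of_mem hx]
      omega
    have hne : ((S.card - j : ℕ) : ℚ) ≠ 0 := by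
      have : 0 < S.card - j := by omega
      positivity
    have := Submodule.smul_of_tower_mem I ((S.card - j : ℕ) : ℚ)⁻¹ hsum
    rwa [← Nat.cast_smul_eq_nsmul ℚ, smul_smul, inv_mul_cancel₀ hne, one_smul] at this

theorem prod_X_mul_esF_mem (hI : ∀ S ⊆ U, j < S.card → esF S j ∈ I) (J : Finset (Fin N)) :
    J ⊆ U → ∀ S ⊆ U, Disjoint J S → j < S.card → ∀ k, J.card + k = j →
      (∏ i ∈ J, X i) * esF S k ∈ I := by
  induction J using Finset.induction_on with
  | empty =>
    rintro - S hSU - hjS k hk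
    simpa [← hk] using hI S hSU hjS
  | insert x J hxJ ih =>
    intro hJU S hSU hdisj hjS k hk
    rw [insert_subset_iff] at hJU
    rw [disjoint_insert_left] at hdisj
    rw [card_insert_of_notMem hxJ] at hk
    have hpascal : (∏ i ∈ insert x J, X i) * esF S k =
        (∏ i ∈ J, X i) * esF (insert x S) (k + 1) - (∏ i ∈ J, X i) * esF S (k + 1) := by
      rw [esF_insert hdisj.1, prod_insert hxJ]
      ring
    rw [hpascal]
    refine I.sub_mem (ih hJU.2 _ (insert_subset hJU.1 hSU) ?_ ?_ _ (by omega))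
      (ih hJU.2 S hSU hdisj.2 hjS _ (by omega))
    · exact disjoint_insert_right.2 ⟨hxJ, hdisj.2⟩
    · exact hjS.trans_le (card_le_card (subset_insert x S))

theorem prod_X_mem_of_esF_mem (hI : ∀ T ⊆ U, T.card = j + 1 → esF T j ∈ I)
    {J : Finset (Fin N)} (hJU : J ⊆ U) (hJ : J.card = j) (hU : 2 * j < U.card) :
    ∏ i ∈ J, X i ∈ I := by
  have hcompl : j < (U \ J).card := by
    rw [card_sdiff_of_subset hJU]
    omega
  simpa only [esF_zero, mul_one] using prod_X_mul_esF_mem I (esF_mem_of_lt_card I hI) J hJU (U \ J)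
    sdiff_subset disjoint_sdiff hcompl 0 hJ

end

/-- Step in the proof of Theorem 6.1: in ℬ⁻ all square-free monomials of degree
n−1 in the variables X₂,…,X_{2n} vanish. -/
theorem stmt15 (n : ℕ) (hn : 3 ≤ n)
    (b : Ideal (MvPolynomial (Fin (2 * n)) ℚ))
    (hb : b = Ideal.span
      ({f | ∃ i : Fin (2 * n), f = X i ^ 2} ∪
       {f | ∃ T : Finset (Fin (2 * n)), (⟨0, by omega⟩ : Fin (2 * n)) ∉ T ∧ T.card = n ∧
          f = esF T (n - 1)})) :
    ∀ J : Finset (Fin (2 * n)), (⟨0, by omega⟩ : Fin (2 * n)) ∉ J → J.card = n - 1 →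
      (∏ j ∈ J, X j : MvPolynomial (Fin (2 * n)) ℚ) ∈ b := by
  intro J hJ hJc
  set U : Finset (Fin (2 * n)) := univ.erase ⟨0, by omega⟩
  have hgen : ∀ T ⊆ U, T.card = n - 1 + 1 → esF T (n - 1) ∈ b := fun T hTU hT =>
    hb ▸ Ideal.subset_span (Or.inr ⟨T, fun h => notMem_erase _ _ (hTU h), by omega, rfl⟩)
  have hJU : J ⊆ U := fun i hi => mem_erase.2 ⟨ne_of_mem_of_not_mem hi hJ, mem_univ i⟩
  have hU : U.card = 2 * n - 1 := by simp [U]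
  exact prod_X_mem_of_esF_mem b hgen hJU hJc (by omega)
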